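/- arXiv:2407.12516 — 2 statements merged into one kernel-verified Lean document; each statement's English description precedes it below -/
import Mathlib

section
/- (Lemma 2, quantitative form.) Let L : ℝ^d → ℝ be differentiable with gradient ∇L Lipschitz continuous with constant L₀, and let θ ∈ ℝ^d and α > 0. Let z be a random vector in ℝ^d whose coordinates are mutually independent with mean 0 and variance 1, and suppose E[‖z‖³] < ∞. Then the single-point zeroth-order gradient estimator ∇^{ZO_sp}L(θ) := (L(θ + αz)/α) · z satisfies ‖E[∇^{ZO_sp}L(θ)] − ∇L(θ)‖ ≤ (L₀ α / 2) · E[‖z‖³]. In particular, E[∇^{ZO_sp}L(θ)] converges to ∇L(θ) as α → 0, i.e. the estimator is asymptotically unbiased. -/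
/-!
Expand `L (θ + α • z) = L θ + α ⟪∇L θ, z⟫ + r(z)`; the Lipschitz bound on the gradient gives
`|r(z)| ≤ L₀ α² ‖z‖² / 2`. The constant term averages out since `E[z] = 0`, and since the
coordinates of `z` are uncorrelated with unit variance, `E[⟪g, z⟫ z] = g` for every `g`.
Hence the bias of the estimator is `E[(r(z) / α) z]`, whose norm is at most `(L₀ α / 2) E‖z‖³`.
-/

open MeasureTheory ProbabilityTheory
open scoped RealInnerProductSpace

section DescentLemma

variable {E : Type*} [NormedAddCommGroup E] [InnerProductSpace ℝ E] [CompleteSpace E]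

theorem abs_sub_sub_inner_gradient_le {f : E → ℝ} {C : ℝ} (hf : Differentiable ℝ f)
    (hlip : ∀ x y, ‖gradient f x - gradient f y‖ ≤ C * ‖x - y‖) (x v : E) :
    |f (x + v) - f x - ⟪gradient f x, v⟫| ≤ C / 2 * ‖v‖ ^ 2 := by
  set φ : ℝ → ℝ := fun t => f (x + t • v) - f x - t * ⟪gradient f x, v⟫
  have hφ (t : ℝ) : HasDerivAt φ ⟪gradient f (x + t • v) - gradient f x, v⟫ t := by
    have hline : HasDerivAt (fun t : ℝ => x + t • v) v t := by
      simpa using ((hasDerivAt_id t).smul_const v).const_add x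
    have := (((hf _).hasGradientAt.hasFDerivAt.comp_hasDerivAt t hline).sub_const (f x)).sub
      ((hasDerivAt_id t).mul_const ⟪gradient f x, v⟫)
    exact this.congr_deriv (by simp [inner_sub_left])
  have hB (t : ℝ) : HasDerivAt (fun t => C / 2 * t ^ 2 * ‖v‖ ^ 2) (C * t * ‖v‖ ^ 2) t :=
    (((hasDerivAt_pow 2 t).const_mul (C / 2)).mul_const (‖v‖ ^ 2)).congr_deriv (by ring)
  have hbound (t : ℝ) (ht : t ∈ Set.Ico (0 : ℝ) 1) :
      ‖⟪gradient f (x + t • v) - gradient f x, v⟫‖ ≤ C * t * ‖v‖ ^ 2 :=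
    calc ‖⟪gradient f (x + t • v) - gradient f x, v⟫‖
        ≤ ‖gradient f (x + t • v) - gradient f x‖ * ‖v‖ := norm_inner_le_norm _ _
      _ ≤ C * ‖t • v‖ * ‖v‖ := by
          gcongr
          simpa using hlip (x + t • v) x
      _ = C * t * ‖v‖ ^ 2 := by rw [norm_smul, Real.norm_of_nonneg ht.1]; ring
  simpa [φ] using image_norm_le_of_norm_deriv_right_le_deriv_boundary
    (fun t _ => (hφ t).continuousAt.continuousWithinAt) (fun t _ => (hφ t).hasDerivWithinAt)
    (by simp [φ]) hB hbound (Set.right_mem_Icc.2 zero_le_one)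

theorem norm_div_smul_sub_sub_inner_gradient_le {f : E → ℝ} {C : ℝ} (hf : Differentiable ℝ f)
    (hlip : ∀ x y, ‖gradient f x - gradient f y‖ ≤ C * ‖x - y‖) (x v : E) {α : ℝ} (hα : 0 < α) :
    ‖((f (x + α • v) - f x - ⟪gradient f x, α • v⟫) / α) • v‖ ≤ C * α / 2 * ‖v‖ ^ 3 := by
  have := abs_sub_sub_inner_gradient_le hf hlip x (α • v)
  rw [norm_smul, Real.norm_of_nonneg hα.le] at this
  rw [norm_smul, Real.norm_eq_abs, abs_div, abs_of_pos hα]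
  calc |f (x + α • v) - f x - ⟪gradient f x, α • v⟫| / α * ‖v‖
      ≤ C / 2 * (α * ‖v‖) ^ 2 / α * ‖v‖ := by gcongr
    _ = C * α / 2 * ‖v‖ ^ 3 := by field_simp

end DescentLemma

theorem integral_mul_eq_ite_of_iIndepFun {Ω ι : Type*} [MeasurableSpace Ω] {μ : Measure Ω}
    [DecidableEq ι] {X : ι → Ω → ℝ}
    (hX : ∀ i, AEStronglyMeasurable (X i) μ) (hindep : iIndepFun X μ)
    (hmean : ∀ i, ∫ ω, X i ω ∂μ = 0) (hvar : ∀ i, ∫ ω, X i ω ^ 2 ∂μ = 1) (i j : ι) :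
    ∫ ω, X i ω * X j ω ∂μ = if i = j then 1 else 0 := by
  split_ifs with hij
  · subst hij
    simpa only [sq] using hvar i
  · rw [(hindep.indepFun hij).integral_fun_mul_eq_mul_integral (hX i) (hX j), hmean i, zero_mul]

section EuclideanSpace

variable {Ω ι : Type*} [MeasurableSpace Ω] {μ : Measure Ω} [Fintype ι]
  {z : Ω → EuclideanSpace ℝ ι}

theorem inner_smul_self_apply (g x : EuclideanSpace ℝ ι) (i : ι) :
    (⟪g, x⟫ • x) i = ∑ j, g j * (x j * x i) := by
  simp only [PiLp.smul_apply, smul_eq_mul, PiLp.inner_apply, RCLike.inner_apply, conj_trivial,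
    Finset.sum_mul]
  exact Finset.sum_congr rfl fun j _ => by ring

theorem integral_eq_zero_of_integral_apply_eq_zero (hz : Integrable z μ)
    (hmean : ∀ i, ∫ ω, z ω i ∂μ = 0) : ∫ ω, z ω ∂μ = 0 := by
  ext i
  rw [eval_integral_piLp hz.eval_piLp, hmean i]
  rfl

theorem integrable_apply_mul_apply (hz : MemLp z 2 μ) (i j : ι) :
    Integrable (fun ω => z ω i * z ω j) μ :=
  (hz.eval_piLp i).integrable_mul (hz.eval_piLp j)

theorem integrable_inner_smul_self (hz : MemLp z 2 μ) (g : EuclideanSpace ℝ ι) :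
    Integrable (fun ω => ⟪g, z ω⟫ • z ω) μ :=
  Integrable.of_eval_piLp fun i => by
    simp_rw [inner_smul_self_apply]
    exact integrable_finsetSum _ fun j _ => (integrable_apply_mul_apply hz j i).const_mul (g j)

theorem integral_inner_smul_self [DecidableEq ι] (hz : MemLp z 2 μ)
    (hcov : ∀ i j, ∫ ω, z ω i * z ω j ∂μ = if i = j then 1 else 0) (g : EuclideanSpace ℝ ι) :
    ∫ ω, ⟪g, z ω⟫ • z ω ∂μ = g := by
  ext i
  rw [eval_integral_piLp (integrable_inner_smul_self hz g).eval_piLp]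
  simp_rw [inner_smul_self_apply]
  rw [integral_finsetSum _ fun j _ => (integrable_apply_mul_apply hz j i).const_mul (g j)]
  simp [integral_const_mul, hcov]

theorem integral_div_smul_eq_add_integral [IsFiniteMeasure μ] [DecidableEq ι] (hz : MemLp z 2 μ)
    (hmean : ∀ i, ∫ ω, z ω i ∂μ = 0)
    (hcov : ∀ i j, ∫ ω, z ω i * z ω j ∂μ = if i = j then 1 else 0)
    (f : EuclideanSpace ℝ ι → ℝ) (x g : EuclideanSpace ℝ ι) {α : ℝ} (hα : α ≠ 0)
    (hint : Integrable (fun ω => ((f (x + α • z ω) - f x - ⟪g, α • z ω⟫) / α) • z ω) μ) :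
    ∫ ω, (f (x + α • z ω) / α) • z ω ∂μ
      = g + ∫ ω, ((f (x + α • z ω) - f x - ⟪g, α • z ω⟫) / α) • z ω ∂μ := by
  have hz₁ : Integrable z μ := memLp_one_iff_integrable.1 (hz.mono_exponent (by norm_num))
  have hint₁ : Integrable (fun ω => (f x / α) • z ω) μ := hz₁.fun_smul _
  have hint₂ := integrable_inner_smul_self hz g
  have hsplit (ω : Ω) : (f (x + α • z ω) / α) • z ω = (f x / α) • z ω + ⟪g, z ω⟫ • z ω
      + ((f (x + α • z ω) - f x - ⟪g, α • z ω⟫) / α) • z ω := by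
    rw [← add_smul, ← add_smul, real_inner_smul_right]
    congr 1
    field_simp
    ring
  simp_rw [hsplit]
  rw [integral_add (hint₁.fun_add hint₂) hint, integral_add hint₁ hint₂, integral_smul,
    integral_eq_zero_of_integral_apply_eq_zero hz₁ hmean, integral_inner_smul_self hz hcov,
    smul_zero, zero_add]

end EuclideanSpace

/-- **Lemma 2, quantitative form.** For `L : ℝ^d → ℝ` differentiable
with `L₀`-Lipschitz gradient, and `z` a random vector with mutually independent
coordinates of mean `0` and variance `1` and `E[‖z‖³] < ∞`, the single-point
zeroth-order estimator `(L(θ+αz)/α) • z` satisfies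
`‖E[∇^{ZO_sp}L(θ)] - ∇L(θ)‖ ≤ (L₀ α / 2) E[‖z‖³]`. -/
theorem stmt3 {Ω : Type*} [MeasurableSpace Ω] {μ : Measure Ω} [IsProbabilityMeasure μ]
    {d : ℕ} (L : EuclideanSpace ℝ (Fin d) → ℝ) (L₀ : ℝ)
    (hdiff : Differentiable ℝ L)
    (hlip : ∀ x y, ‖gradient L x - gradient L y‖ ≤ L₀ * ‖x - y‖)
    (θ : EuclideanSpace ℝ (Fin d)) (α : ℝ) (hα : 0 < α)
    (z : Ω → EuclideanSpace ℝ (Fin d)) (hzm : Measurable z)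
    (hindep : iIndepFun (fun i ω => z ω i) μ)
    (hmean : ∀ i, ∫ ω, z ω i ∂μ = 0)
    (hvar : ∀ i, ∫ ω, (z ω i) ^ 2 ∂μ = 1)
    (hmom3 : Integrable (fun ω => ‖z ω‖ ^ 3) μ) :
    ‖(∫ ω, (L (θ + α • z ω) / α) • z ω ∂μ) - gradient L θ‖
      ≤ L₀ * α / 2 * ∫ ω, ‖z ω‖ ^ 3 ∂μ := by
  have hz₃ : MemLp z 3 μ :=
    (integrable_norm_rpow_iff hzm.aestronglyMeasurable (by norm_num) (by norm_num)).1
      (by simpa using hmom3)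
  have hcov : ∀ i j, ∫ ω, z ω i * z ω j ∂μ = if i = j then 1 else 0 :=
    integral_mul_eq_ite_of_iIndepFun (fun i => by fun_prop) hindep hmean hvar
  have hR (ω : Ω) := norm_div_smul_sub_sub_inner_gradient_le hdiff hlip θ (z ω) hα
  have hRint := (hmom3.const_mul (L₀ * α / 2)).mono'
    (by have := hdiff.continuous; fun_prop) (ae_of_all μ hR)
  rw [integral_div_smul_eq_add_integral (hz₃.mono_exponent (by norm_num)) hmean hcov L θ
    (gradient L θ) hα.ne' hRint, add_sub_cancel_left]
  exact (norm_integral_le_of_norm_le (hmom3.const_mul _) (ae_of_all _ hR)).trans_eq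
    (integral_const_mul _ _)
end

section
/- (Proposition 1, two-point part, exact limiting form.) Let z be a random vector in ℝ^d whose coordinates are independent and identically distributed with mean 0, variance 1 and finite fourth moment, and set β := Var[z_1²]. Let g be a random vector in ℝ^d with finite second moments, independent of z. Define V_θ := (1/d) Σ_{i=1}^d Var[g_i] and S_θ := (1/d) Σ_{i=1}^d (E[g_i])². Then the average coordinate-wise variance of the estimator ⟨g, z⟩ z satisfies (1/d) Σ_{i=1}^d Var[(⟨g, z⟩ z)_i] = (d + β) V_θ + (d + β − 1) S_θ. -/
/-!
Expanding the square and using the independence of `g` and `z`,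
`E[(⟨g,z⟩ z_i)²] = ∑_{j,k} E[g_j g_k] E[z_j z_k z_i²]`. The mixed moment `E[z_j z_k z_i²]`
vanishes for `j ≠ k`, since then some index occurs exactly once and that coordinate is
independent of the others and centred; it is `E[z_i⁴] = β + 1` for `j = k = i` and `1` otherwise.
Similarly `E[⟨g,z⟩ z_i] = E[g_i]`, so `Var[(⟨g,z⟩ z)_i] = ∑_j E[g_j²] + β E[g_i²] - E[g_i]²`, and
averaging over `i` with `E[g_j²] = Var[g_j] + E[g_j]²` gives the formula.
-/

open MeasureTheory ProbabilityTheory Finset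

instance ENNReal.HolderTriple.instFourFourTwo : ENNReal.HolderTriple 4 4 2 where
  inv_add_inv_eq_inv := by
    rw [← two_mul, show (4 : ENNReal) = 2 * 2 by norm_num, ENNReal.mul_inv (by simp) (by simp),
      ← mul_assoc, ENNReal.mul_inv_cancel (by simp) (by simp), one_mul]

lemma sq_sum_mul_mul {ι : Type*} [Fintype ι] (a b : ι → ℝ) (c : ℝ) :
    ((∑ j, a j * b j) * c) ^ 2 = ∑ j, ∑ k, (a j * a k) * (b j * b k * c ^ 2) := by
  rw [sq, Finset.sum_mul, Fintype.sum_mul_sum]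
  exact sum_congr rfl fun j _ => sum_congr rfl fun k _ => by ring

lemma MeasureTheory.MemLp.sq_memLp_two {α : Type*} [MeasurableSpace α] {μ : Measure α}
    {f : α → ℝ} (hf : MemLp f 4 μ) : MemLp (fun x => f x ^ 2) 2 μ := by
  simpa only [sq] using hf.mul' (r := 2) hf

namespace ProbabilityTheory

variable {Ω ι : Type*} [MeasurableSpace Ω] {μ : Measure Ω}

section IndependentFamily

variable {X : ι → Ω → ℝ}

lemma iIndepFun.integral_mul_comp_eq_zero (hX : iIndepFun X μ) (hXm : ∀ i, AEMeasurable (X i) μ)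
    {m a b : ι} (ha : a ≠ m) (hb : b ≠ m) (hm : μ[X m] = 0) {φ : ℝ × ℝ → ℝ}
    (hφ : Measurable φ) :
    ∫ ω, X m ω * φ (X a ω, X b ω) ∂μ = 0 := by
  have hind : IndepFun (X m) (fun ω => φ (X a ω, X b ω)) μ :=
    ((hX.indepFun_prodMk₀ hXm a b m ha hb).comp hφ measurable_id).symm
  rw [hind.integral_fun_mul_eq_mul_integral (hXm m).aestronglyMeasurable
    (hφ.comp_aemeasurable ((hXm a).prodMk (hXm b))).aestronglyMeasurable, hm, zero_mul]

variable [DecidableEq ι]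

lemma iIndepFun.integral_mul_eq_ite (hX : iIndepFun X μ) (hXm : ∀ i, AEMeasurable (X i) μ)
    (hmean : ∀ i, μ[X i] = 0) (j i : ι) :
    ∫ ω, X j ω * X i ω ∂μ = if j = i then ∫ ω, X i ω ^ 2 ∂μ else 0 := by
  split_ifs with hji
  · simp only [hji, sq]
  · rw [(hX.indepFun hji).integral_fun_mul_eq_mul_integral (hXm j).aestronglyMeasurable
      (hXm i).aestronglyMeasurable, hmean j, zero_mul]

lemma iIndepFun.integral_mul_mul_sq_eq_ite (hX : iIndepFun X μ)
    (hXm : ∀ i, AEMeasurable (X i) μ) (hmean : ∀ i, μ[X i] = 0) (i j k : ι) :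
    ∫ ω, X j ω * X k ω * X i ω ^ 2 ∂μ =
      if j = k then
        (if j = i then ∫ ω, X i ω ^ 4 ∂μ else (∫ ω, X j ω ^ 2 ∂μ) * ∫ ω, X i ω ^ 2 ∂μ)
      else 0 := by
  have hφ : Measurable fun p : ℝ × ℝ => p.1 * p.2 ^ 2 := by fun_prop
  split_ifs with hjk hji
  · subst hjk hji
    congr 1 with ω
    ring
  · subst hjk
    have hind : IndepFun (fun ω => X j ω ^ 2) (fun ω => X i ω ^ 2) μ :=
      (hX.indepFun hji).comp (measurable_id.pow_const 2) (measurable_id.pow_const 2)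
    rw [← hind.integral_fun_mul_eq_mul_integral ((hXm j).pow_const 2).aestronglyMeasurable
      ((hXm i).pow_const 2).aestronglyMeasurable]
    congr 1 with ω
    ring
  by_cases hji : j = i
  · subst hji
    rw [← hX.integral_mul_comp_eq_zero hXm hjk hjk (hmean k) hφ]
    congr 1 with ω
    ring
  · rw [← hX.integral_mul_comp_eq_zero hXm (Ne.symm hjk) (Ne.symm hji) (hmean j) hφ]
    congr 1 with ω
    ring

end IndependentFamily

section Estimator

variable {G Z : Ω → ι → ℝ}

lemma IndepFun.integral_sum_mul_mul [Fintype ι] (hGZ : IndepFun G Z μ)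
    (hG : ∀ j, Integrable (fun ω => G ω j) μ) (hZ : ∀ j, MemLp (fun ω => Z ω j) 2 μ) (i : ι) :
    ∫ ω, (∑ j, G ω j * Z ω j) * Z ω i ∂μ =
      ∑ j, (∫ ω, G ω j ∂μ) * ∫ ω, Z ω j * Z ω i ∂μ := by
  have hind : ∀ j, IndepFun (fun ω => G ω j) (fun ω => Z ω j * Z ω i) μ := fun j =>
    hGZ.comp (φ := fun v : ι → ℝ => v j) (ψ := fun v : ι → ℝ => v j * v i)
      (by fun_prop) (by fun_prop)
  have hint : ∀ j, Integrable (fun ω => G ω j * (Z ω j * Z ω i)) μ := fun j =>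
    (hind j).integrable_mul (hG j) ((hZ j).integrable_mul (hZ i))
  simp_rw [Finset.sum_mul, mul_assoc]
  rw [integral_finsetSum _ fun j _ => hint j]
  exact sum_congr rfl fun j _ => (hind j).integral_fun_mul_eq_mul_integral
    (hG j).aestronglyMeasurable ((hZ j).integrable_mul (hZ i)).aestronglyMeasurable

lemma IndepFun.indepFun_mul_mul_sq (hGZ : IndepFun G Z μ) (i j k : ι) :
    IndepFun (fun ω => G ω j * G ω k) (fun ω => Z ω j * Z ω k * Z ω i ^ 2) μ :=
  hGZ.comp (φ := fun v : ι → ℝ => v j * v k) (ψ := fun v : ι → ℝ => v j * v k * v i ^ 2)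
    (by fun_prop) (by fun_prop)

lemma IndepFun.integrable_coord_mul_coord_mul (hGZ : IndepFun G Z μ)
    (hG : ∀ j, MemLp (fun ω => G ω j) 2 μ) (hZ : ∀ j, MemLp (fun ω => Z ω j) 4 μ) (i j k : ι) :
    Integrable (fun ω => (G ω j * G ω k) * (Z ω j * Z ω k * Z ω i ^ 2)) μ := by
  have hZsq : MemLp (fun ω => Z ω i ^ 2) 2 μ := (hZ i).sq_memLp_two
  have hZjk : MemLp (fun ω => Z ω j * Z ω k) 2 μ := (hZ k).mul' (hZ j)
  exact (hGZ.indepFun_mul_mul_sq i j k).integrable_mul ((hG j).integrable_mul (hG k))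
    (hZjk.integrable_mul hZsq)

lemma IndepFun.integrable_sq_sum_mul_mul [Fintype ι] (hGZ : IndepFun G Z μ)
    (hG : ∀ j, MemLp (fun ω => G ω j) 2 μ) (hZ : ∀ j, MemLp (fun ω => Z ω j) 4 μ) (i : ι) :
    Integrable (fun ω => ((∑ j, G ω j * Z ω j) * Z ω i) ^ 2) μ := by
  simp_rw [sq_sum_mul_mul]
  exact integrable_finsetSum _ fun j _ => integrable_finsetSum _ fun k _ =>
    hGZ.integrable_coord_mul_coord_mul hG hZ i j k

lemma IndepFun.integral_sq_sum_mul_mul [Fintype ι] (hGZ : IndepFun G Z μ)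
    (hG : ∀ j, MemLp (fun ω => G ω j) 2 μ) (hZ : ∀ j, MemLp (fun ω => Z ω j) 4 μ) (i : ι) :
    ∫ ω, ((∑ j, G ω j * Z ω j) * Z ω i) ^ 2 ∂μ =
      ∑ j, ∑ k, (∫ ω, G ω j * G ω k ∂μ) * ∫ ω, Z ω j * Z ω k * Z ω i ^ 2 ∂μ := by
  have hint := hGZ.integrable_coord_mul_coord_mul hG hZ i
  simp_rw [sq_sum_mul_mul]
  rw [integral_finsetSum _ fun j _ => integrable_finsetSum _ fun k _ => hint j k]
  refine sum_congr rfl fun j _ => ?_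
  rw [integral_finsetSum _ fun k _ => hint j k]
  refine sum_congr rfl fun k _ => ?_
  have hGm := fun j => (hG j).aestronglyMeasurable
  have hZm := fun j => (hZ j).aestronglyMeasurable
  exact (hGZ.indepFun_mul_mul_sq i j k).integral_fun_mul_eq_mul_integral (by fun_prop)
    (by fun_prop)

lemma IndepFun.variance_sum_mul_mul [Fintype ι] [IsProbabilityMeasure μ] (hGZ : IndepFun G Z μ)
    (hG : ∀ j, MemLp (fun ω => G ω j) 2 μ) (hZind : iIndepFun (fun j ω => Z ω j) μ)
    (hZ : ∀ j, MemLp (fun ω => Z ω j) 4 μ) (hmean : ∀ j, ∫ ω, Z ω j ∂μ = 0)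
    (hsq : ∀ j, ∫ ω, Z ω j ^ 2 ∂μ = 1) (i : ι) :
    variance (fun ω => (∑ j, G ω j * Z ω j) * Z ω i) μ =
      ∑ j, ∫ ω, G ω j ^ 2 ∂μ + (∫ ω, Z ω i ^ 4 ∂μ - 1) * ∫ ω, G ω i ^ 2 ∂μ
        - (∫ ω, G ω i ∂μ) ^ 2 := by
  classical
  have hZm : ∀ j, AEMeasurable (fun ω => Z ω j) μ := fun j => (hZ j).aemeasurable
  have hZ2 : ∀ j, MemLp (fun ω => Z ω j) 2 μ := fun j => (hZ j).mono_exponent (by norm_num)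
  have hGm := fun j => (hG j).aestronglyMeasurable
  have hZsm := fun j => (hZ j).aestronglyMeasurable
  have hY : MemLp (fun ω => (∑ j, G ω j * Z ω j) * Z ω i) 2 μ :=
    (memLp_two_iff_integrable_sq (by fun_prop)).2 (hGZ.integrable_sq_sum_mul_mul hG hZ i)
  rw [variance_eq_sub hY]
  simp only [Pi.pow_apply]
  rw [hGZ.integral_sq_sum_mul_mul hG hZ i,
    hGZ.integral_sum_mul_mul (fun j => (hG j).integrable one_le_two) hZ2 i]
  simp only [hZind.integral_mul_mul_sq_eq_ite hZm hmean, hZind.integral_mul_eq_ite hZm hmean, hsq]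
  simp only [mul_ite, mul_one, mul_zero, one_pow, sum_ite_eq, sum_ite_eq', mem_univ, if_true,
    ← sq]
  rw [sub_left_inj, ← sum_erase_add _ _ (mem_univ i), if_pos rfl,
    sum_congr rfl fun j hj => if_neg (ne_of_mem_erase hj), ← sum_erase_add univ _ (mem_univ i)]
  ring

end Estimator

end ProbabilityTheory

theorem stmt7_general {Ω : Type*} [MeasurableSpace Ω] {μ : Measure Ω} [IsProbabilityMeasure μ]
    {d : ℕ} (z g : Ω → Fin d → ℝ) (β : ℝ)
    (hzindep : iIndepFun (fun i ω => z ω i) μ)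
    (hmean : ∀ i, ∫ ω, z ω i ∂μ = 0)
    (hvar : ∀ i, variance (fun ω => z ω i) μ = 1)
    (hmom4 : ∀ i, MemLp (fun ω => z ω i) 4 μ)
    (hβ : ∀ i, variance (fun ω => (z ω i) ^ 2) μ = β)
    (hg2 : ∀ i, MemLp (fun ω => g ω i) 2 μ)
    (hindep : IndepFun g z μ) :
    (d : ℝ)⁻¹ * ∑ i, variance (fun ω => (∑ j, g ω j * z ω j) * z ω i) μ
      = ((d : ℝ) + β) * ((d : ℝ)⁻¹ * ∑ i, variance (fun ω => g ω i) μ)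
        + ((d : ℝ) + β - 1) * ((d : ℝ)⁻¹ * ∑ i, (∫ ω, g ω i ∂μ) ^ 2) := by
  have hz2 : ∀ i, ∫ ω, z ω i ^ 2 ∂μ = 1 := fun i => by
    rw [← hvar i, variance_of_integral_eq_zero (hmom4 i).aemeasurable (hmean i)]
  have hz4 : ∀ i, ∫ ω, z ω i ^ 4 ∂μ - 1 = β := fun i => by
    rw [← hβ i, variance_eq_sub (hmom4 i).sq_memLp_two]
    simp only [Pi.pow_apply, ← pow_mul, hz2, one_pow]
  have hg : ∀ i, ∫ ω, g ω i ^ 2 ∂μ = variance (fun ω => g ω i) μ + (∫ ω, g ω i ∂μ) ^ 2 :=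
    fun i => by rw [variance_eq_sub (hg2 i)]; simp only [Pi.pow_apply, sub_add_cancel]
  simp only [hindep.variance_sum_mul_mul hg2 hzindep hmom4 hmean hz2, hz4, hg]
  rcases eq_or_ne d 0 with rfl | hd
  · simp
  rw [sum_sub_distrib, sum_add_distrib, sum_const, card_univ, Fintype.card_fin, nsmul_eq_mul,
    ← mul_sum, sum_add_distrib]
  field_simp
  ring

/-- **Proposition 1, two-point part, exact limiting form.**
For `z` with i.i.d. coordinates of mean `0`, variance `1` and finite fourth
moment, `β := Var[z₁²]`, and `g` with finite second moments independent of `z`,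
setting `V_θ := (1/d) ∑_i Var[g_i]` and `S_θ := (1/d) ∑_i (E[g_i])²`, the average
coordinate-wise variance of `⟪g,z⟫ z` equals `(d+β) V_θ + (d+β-1) S_θ`. -/
theorem stmt7 {Ω : Type*} [MeasurableSpace Ω] {μ : Measure Ω} [IsProbabilityMeasure μ]
    {d : ℕ} (z g : Ω → Fin d → ℝ) (β : ℝ)
    (hzm : Measurable z) (hgm : Measurable g)
    (hzindep : iIndepFun (fun i ω => z ω i) μ)
    (hzid : ∀ i j, IdentDistrib (fun ω => z ω i) (fun ω => z ω j) μ μ)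
    (hmean : ∀ i, ∫ ω, z ω i ∂μ = 0)
    (hvar : ∀ i, variance (fun ω => z ω i) μ = 1)
    (hmom4 : ∀ i, MemLp (fun ω => z ω i) 4 μ)
    (hβ : ∀ i, variance (fun ω => (z ω i) ^ 2) μ = β)
    (hg2 : ∀ i, MemLp (fun ω => g ω i) 2 μ)
    (hindep : IndepFun g z μ) :
    (d : ℝ)⁻¹ * ∑ i, variance (fun ω => (∑ j, g ω j * z ω j) * z ω i) μ
      = ((d : ℝ) + β) * ((d : ℝ)⁻¹ * ∑ i, variance (fun ω => g ω i) μ)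
        + ((d : ℝ) + β - 1) * ((d : ℝ)⁻¹ * ∑ i, (∫ ω, g ω i ∂μ) ^ 2) :=
  stmt7_general z g β hzindep hmean hvar hmom4 hβ hg2 hindep
end
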